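/- Let Γ = {a^(1), e^(0)} be both the input and output alphabet. Let M' be the monadic macro tree transducer with states q0 (rank 1, initial) and q (rank 2) and rules q0(a(x1)) → q(x1, q0(x1)), q0(e) → e, q(a(x1), y1) → q(x1, y1), q(e, y1) → a(a(y1)), and let N' be the monadic macro tree transducer with states p0 (rank 1, initial) and p (rank 2) and rules p0(a(x1)) → p(x1, p(x1, p0(x1))), p0(e) → e, p(a(x1), y1) → p(x1, y1), p(e, y1) → a(y1). Then M' and N' are equivalent (both map aⁿ(e) to a^{2n}(e)), but for every n the height-balance of M'(aⁿ(x)) and N'(aⁿ(x)) equals n; hence equivalent monadic macro tree transducers need not have bounded height-balance. -/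

import Mathlib

/-! ## Finite ordered ranked trees -/

/-- Finite ordered labeled trees. -/
inductive RTree (α : Type) : Type
  | node : α → List (RTree α) → RTree α

namespace RTree

variable {α β : Type}

/-- The label of the root node. -/
def label : RTree α → α
  | node a _ => a

mutual
  /-- The size (number of nodes) of a tree. -/
  def size : RTree α → ℕ
    | node _ ts => 1 + sizeList ts
  def sizeList : List (RTree α) → ℕ
    | [] => 0
    | t :: ts => size t + sizeList ts
end

mutual
  /-- The height of a tree (a leaf has height 1). -/
  def height : RTree α → ℕ
    | node _ ts => 1 + heightList ts
  def heightList : List (RTree α) → ℕ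
    | [] => 0
    | t :: ts => max (height t) (heightList ts)
end

mutual
  /-- Relabeling of a tree. -/
  def map (f : α → β) : RTree α → RTree β
    | node a ts => node (f a) (mapList f ts)
  def mapList (f : α → β) : List (RTree α) → List (RTree β)
    | [] => []
    | t :: ts => map f t :: mapList f ts
end

/-- `WF rk t` means `t` is a tree over the ranked alphabet with rank function `rk`:
every node labeled `a` has exactly `rk a` children.  Thus `T_Σ = {t | WF rk t}`. -/
inductive WF (rk : α → ℕ) : RTree α → Prop
  | node {a : α} {ts : List (RTree α)} :
      ts.length = rk a → (∀ t ∈ ts, WF rk t) → WF rk (node a ts)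

/-- `SubtreeAt t u r`: `u` is (the Dewey path of) a node of `t` and `r` is the
subtree of `t` rooted at `u`. -/
inductive SubtreeAt : RTree α → List ℕ → RTree α → Prop
  | here (t : RTree α) : SubtreeAt t [] t
  | child {a : α} {ts : List (RTree α)} {i : ℕ} {u : List ℕ} {ti r : RTree α} :
      ts[i]? = some ti → SubtreeAt ti u r → SubtreeAt (node a ts) (i :: u) r

/-- `ReplaceAt t u r t'`: `u` is a node of `t`, and `t'` is the tree `t[u ← r]`
obtained from `t` by replacing the subtree rooted at `u` by `r`. -/
inductive ReplaceAt : RTree α → List ℕ → RTree α → RTree α → Prop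
  | here (t r : RTree α) : ReplaceAt t [] r r
  | child {a : α} {ts : List (RTree α)} {i : ℕ} {u : List ℕ} {r ti ti' : RTree α} :
      ts[i]? = some ti → ReplaceAt ti u r ti' →
      ReplaceAt (node a ts) (i :: u) r (node a (ts.set i ti'))

end RTree

/-- A (complete) deterministic finite-state bottom-up tree automaton over the
alphabet `S`, with state set `P` and final states `final`. -/
structure BUA (S P : Type) where
  delta : S → List P → P
  final : Set P

variable {S P : Type}

mutual
  /-- The state reached by a bottom-up automaton on a tree. -/
  def buaRun (A : BUA S P) : RTree S → P
    | .node a ts => A.delta a (buaRunList A ts)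
  def buaRunList (A : BUA S P) : List (RTree S) → List P
    | [] => []
    | t :: ts => buaRun A t :: buaRunList A ts
end

/-- A tree language over the ranked alphabet `(S, rk)` is regular if it is recognized
by a deterministic finite-state bottom-up tree automaton. -/
def RegularTreeLang (rk : S → ℕ) (L : Set (RTree S)) : Prop :=
  ∃ (P : Type) (_ : Fintype P) (A : BUA S P),
    L = {t | RTree.WF rk t ∧ buaRun A t ∈ A.final}
/-! ## Deterministic macro tree transducers

A state of rank `m+1` is encoded by `prm q = m` (its number of context parameters).
Right-hand sides of rules are trees over `Δ ∪ Q ∪ X ∪ Y`, where every `Q`-labeled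
node has an input variable `x_i` as its (implicit) first child; this is encoded by
the constructor `MRhs.call q i ps`.  A top-down tree transducer is exactly a macro
tree transducer all of whose states have rank one (`prm q = 0`).

To be able to talk about partial inputs `s[u ← x]`, input trees are trees over
`Option S`, where `none` plays the role of the fresh rank-0 symbol `x`; an
ordinary input tree `s` is represented as `RTree.map some s`.  Outputs (sentential
forms) are trees over the alphabet `PL Q D`: output symbols `PL.out d`, unresolved
state calls `PL.st q` (i.e. `q(x, t₁, …, t_m)`, whose children are the current
parameter trees), and formal context parameters `PL.pr j` (i.e. `y_{j+1}`). -/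

/-- Labels of sentential forms produced by a macro tree transducer. -/
inductive PL (Q D : Type) : Type
  | out : D → PL Q D
  | st : Q → PL Q D
  | pr : ℕ → PL Q D

/-- Right-hand sides of rules of a macro tree transducer with states `Q` and output
alphabet `D`: `out d ts` is an output symbol with subtrees, `param j` is the context
parameter `y_{j+1}`, and `call q i ps` is a state call `q(x_{i+1}, ps)`. -/
inductive MRhs (Q D : Type) : Type
  | out : D → List (MRhs Q D) → MRhs Q D
  | param : ℕ → MRhs Q D
  | call : Q → ℕ → List (MRhs Q D) → MRhs Q D

/-- Well-formedness of a right-hand side for a rule of a state with `m` parameters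
and an input symbol of rank `k`: output symbols have the right number of children,
parameters are among `y_1, …, y_m`, input variables are among `x_1, …, x_k`, and a
call of state `q'` passes exactly `prm q'` parameter trees. -/
inductive RhsWF {Q D : Type} (rkD : D → ℕ) (prm : Q → ℕ) (k m : ℕ) : MRhs Q D → Prop
  | out {d ts} : ts.length = rkD d → (∀ t ∈ ts, RhsWF rkD prm k m t) →
      RhsWF rkD prm k m (.out d ts)
  | param {j} : j < m → RhsWF rkD prm k m (.param j)
  | call {q i ps} : i < k → ps.length = prm q → (∀ t ∈ ps, RhsWF rkD prm k m t) →
      RhsWF rkD prm k m (.call q i ps)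

/-- A deterministic macro tree transducer with states `Q`, input alphabet `(S, rkS)`
and output alphabet `(D, rkD)`.  `prm q` is the number of context parameters of
state `q` (so `q` has rank `prm q + 1`); `rules q σ` is the right-hand side of the
`(q,σ)`-rule, if present (determinism: at most one rule per pair). -/
structure MTT (Q S D : Type) where
  rkS : S → ℕ
  rkD : D → ℕ
  prm : Q → ℕ
  init : Q
  rules : Q → S → Option (MRhs Q D)

namespace MTT

variable {Q S D : Type}

/-- `M` is a well-formed macro tree transducer: the initial state has rank one and
all right-hand sides are well-formed. -/
def Proper (M : MTT Q S D) : Prop :=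
  M.prm M.init = 0 ∧
    ∀ q σ r, M.rules q σ = some r → RhsWF M.rkD M.prm (M.rkS σ) (M.prm q) r

/-- `M` is total: there is exactly one rule for every state and input symbol. -/
def Total (M : MTT Q S D) : Prop := ∀ q σ, (M.rules q σ).isSome

end MTT

/-- A top-down tree transducer is a macro tree transducer each of whose states has
rank one, i.e. no context parameters. -/
def IsTopDown {Q S D : Type} (M : MTT Q S D) : Prop := ∀ q, M.prm q = 0

/-- A macro tree transducer is monadic if its input and output ranked alphabets
only contain symbols of rank 1 and rank 0. -/
def MTT.Monadic {Q S D : Type} (M : MTT Q S D) : Prop :=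
  (∀ σ, M.rkS σ ≤ 1) ∧ (∀ d, M.rkD d ≤ 1)

variable {Q S D : Type}

mutual
  /-- Second-order substitution of the parameter leaves `y_{j+1}` of a sentential
  form by the trees `vs`. -/
  def psubst (vs : List (RTree (PL Q D))) : RTree (PL Q D) → RTree (PL Q D)
    | .node (.pr j) _ => vs.getD j (.node (.pr j) [])
    | .node (.out d) ts => .node (.out d) (psubstList vs ts)
    | .node (.st q) ts => .node (.st q) (psubstList vs ts)
  def psubstList (vs : List (RTree (PL Q D))) :
      List (RTree (PL Q D)) → List (RTree (PL Q D))
    | [] => []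
    | t :: ts => psubst vs t :: psubstList vs ts
end

/-- The fresh rank-0 input symbol `x` used in partial inputs `s[u ← x]`. -/
def xLeaf {S : Type} : RTree (Option S) := .node none []

mutual
  /-- Big-step semantics of a macro tree transducer: `MEval M q s t` means that the
  computation of `M` started in state `q` on the input tree `s` (a tree over
  `Option S`, where `none` is the fresh symbol `x` of partial inputs) produces the
  (sentential form) tree `t`.  On the symbol `x` the computation blocks, yielding
  the unresolved call `q(x, y_1, …, y_m)`.  For `s ∈ T_Σ` (no occurrence of `x`)
  and well-formed transducers, `t` contains no `PL.st` labels, and `M_q(s)` is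
  defined iff such a `t` exists; determinism makes `t` unique. -/
  inductive MEval (M : MTT Q S D) : Q → RTree (Option S) → RTree (PL Q D) → Prop
    | atX (q : Q) :
        MEval M q (.node none [])
          (.node (.st q) ((List.range (M.prm q)).map fun j => .node (.pr j) []))
    | step {q : Q} {σ : S} {ss : List (RTree (Option S))} {r : MRhs Q D}
        {t : RTree (PL Q D)} :
        M.rules q σ = some r → MExpand M ss r t → MEval M q (.node (some σ) ss) t

  /-- Evaluation of a right-hand side with current input subtrees `ss`. -/
  inductive MExpand (M : MTT Q S D) :
      List (RTree (Option S)) → MRhs Q D → RTree (PL Q D) → Prop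
    | out {ss d ts us} : MExpandList M ss ts us →
        MExpand M ss (.out d ts) (.node (.out d) us)
    | param {ss j} : MExpand M ss (.param j) (.node (.pr j) [])
    | call {ss : List (RTree (Option S))} {q : Q} {i : ℕ} {ps : List (MRhs Q D)}
        {si : RTree (Option S)} {vs : List (RTree (PL Q D))} {u : RTree (PL Q D)} :
        ss[i]? = some si → MExpandList M ss ps vs → MEval M q si u →
        MExpand M ss (.call q i ps) (psubst vs u)

  inductive MExpandList (M : MTT Q S D) :
      List (RTree (Option S)) → List (MRhs Q D) → List (RTree (PL Q D)) → Prop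
    | nil {ss} : MExpandList M ss [] []
    | cons {ss t ts u us} : MExpand M ss t u → MExpandList M ss ts us →
        MExpandList M ss (t :: ts) (u :: us)
end

/-- The translation `τ_M ⊆ T_Σ × T_Δ` realized by a macro tree transducer `M`
(the graph of the partial function `τ_M : T_Σ ⇀ T_Δ`). -/
def MTT.tau (M : MTT Q S D) : Set (RTree S × RTree D) :=
  {p | RTree.WF M.rkS p.1 ∧ MEval M M.init (RTree.map some p.1) (RTree.map PL.out p.2)}

/-! ## Statement 4

The monadic macro tree transducers `M'` and `N'` of Figure 3, over the monadic
alphabet `Γ = {a⁽¹⁾, e⁽⁰⁾}` (encoded as `Bool` with `a = true`, `e = false`) used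
both as input and output alphabet.  States are encoded as `Bool`:
`q0 = p0 = false` (initial, rank 1) and `q = p = true` (rank 2). -/

/-- Rank function of `Γ = {a⁽¹⁾, e⁽⁰⁾}`. -/
def rkGam : Bool → ℕ := fun b => cond b 1 0

/-- `M'`: `q0(a(x1)) → q(x1, q0(x1))`, `q0(e) → e`, `q(a(x1),y1) → q(x1,y1)`,
`q(e,y1) → a(a(y1))`. -/
def Mex' : MTT Bool Bool Bool where
  rkS := rkGam
  rkD := rkGam
  prm := fun q => cond q 1 0
  init := false
  rules := fun q σ =>
    match q, σ with
    | false, true => some (.call true 0 [.call false 0 []])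
    | false, false => some (.out false [])
    | true, true => some (.call true 0 [.param 0])
    | true, false => some (.out true [.out true [.param 0]])

/-- `N'`: `p0(a(x1)) → p(x1, p(x1, p0(x1)))`, `p0(e) → e`, `p(a(x1),y1) → p(x1,y1)`,
`p(e,y1) → a(y1)`. -/
def Nex' : MTT Bool Bool Bool where
  rkS := rkGam
  rkD := rkGam
  prm := fun q => cond q 1 0
  init := false
  rules := fun q σ =>
    match q, σ with
    | false, true => some (.call true 0 [.call true 0 [.call false 0 []]])
    | false, false => some (.out false [])
    | true, true => some (.call true 0 [.param 0])
    | true, false => some (.out true [.param 0])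

/-- The monadic input/output tree `aⁿ(e)`. -/
def aPow : ℕ → RTree Bool
  | 0 => .node false []
  | n + 1 => .node true [aPow n]

/-- The partial monadic input tree `aⁿ(x)`. -/
def aPowX : ℕ → RTree (Option Bool)
  | 0 => .node none []
  | n + 1 => .node (some true) [aPowX n]


/-! On a stack of `a`s, the parameter state of either transducer walks down the input and
returns its output on the bottom symbol unchanged, so every `a` read by the initial state
wraps the result for the rest of the input in a fixed number of copies of that output:
`M'` puts one copy of `q(e, y₁) = a(a(y₁))`, `N'` two copies of `p(e, y₁) = a(y₁)`. Hence
both map `aⁿ(e)` to `a²ⁿ(e)`. On `aⁿ(x)` the parameter state is stuck at `x` instead, and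
the same count yields `n` pending calls for `M'` but `2n` for `N'`, of heights `n + 1` and
`2n + 1`. Since evaluation is deterministic, these runs are the only ones. -/

namespace RTree

variable {α β : Type}

def stack (a : α) : ℕ → RTree α → RTree α
  | 0, t => t
  | k + 1, t => node a [stack a k t]

@[simp] theorem stack_zero (a : α) (t : RTree α) : stack a 0 t = t := rfl

theorem stack_succ (a : α) (k : ℕ) (t : RTree α) :
    stack a (k + 1) t = node a [stack a k t] := rfl

theorem stack_add (a : α) (m n : ℕ) (t : RTree α) :
    stack a (m + n) t = stack a m (stack a n t) := by
  induction m with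
  | zero => simp
  | succ m ih => rw [Nat.add_right_comm, stack_succ, stack_succ, ih]

theorem height_stack (a : α) (k : ℕ) (t : RTree α) :
    (stack a k t).height = k + t.height := by
  induction k with
  | zero => simp
  | succ k ih => simp only [stack_succ, height, heightList, ih]; omega

theorem map_stack (f : α → β) (a : α) (k : ℕ) (t : RTree α) :
    (stack a k t).map f = stack (f a) k (t.map f) := by
  induction k with
  | zero => rfl
  | succ k ih => simp only [stack_succ, map, mapList, ih]

theorem replaceAt_stack (a : α) (n : ℕ) (t r : RTree α) :
    ReplaceAt (stack a n t) (List.replicate n 0) r (stack a n r) := by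
  induction n with
  | zero => exact .here t r
  | succ n ih => exact .child rfl ih

end RTree

open RTree

theorem psubst_node_pr_zero (v : RTree (PL Q D)) (vs : List (RTree (PL Q D))) :
    psubst (v :: vs) (.node (.pr 0) []) = v := by
  simp [psubst]

theorem psubst_leaf_of_ne_pr {c : PL Q D} (hc : ∀ j, c ≠ .pr j) (vs : List (RTree (PL Q D))) :
    psubst vs (.node c []) = .node c [] := by
  cases c <;> simp_all [psubst, psubstList]

theorem psubst_stack {c : PL Q D} (hc : ∀ j, c ≠ .pr j) (vs : List (RTree (PL Q D))) (k : ℕ)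
    (t : RTree (PL Q D)) : psubst vs (stack c k t) = stack c k (psubst vs t) := by
  induction k with
  | zero => rfl
  | succ k ih => cases c <;> simp_all [stack_succ, psubst, psubstList]

mutual

theorem MEval.unique {M : MTT Q S D} {q : Q} {s : RTree (Option S)} {t t' : RTree (PL Q D)} :
    MEval M q s t → MEval M q s t' → t = t'
  | .atX _, .atX _ => rfl
  | .step hr he, .step hr' he' => by
    cases hr.symm.trans hr'
    exact MExpand.unique he he'

theorem MExpand.unique {M : MTT Q S D} {ss : List (RTree (Option S))} {r : MRhs Q D}
    {t t' : RTree (PL Q D)} : MExpand M ss r t → MExpand M ss r t' → t = t'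
  | .out hl, .out hl' => by rw [MExpandList.unique hl hl']
  | .param, .param => rfl
  | .call hi hl he, .call hi' hl' he' => by
    cases hi.symm.trans hi'
    rw [MExpandList.unique hl hl', MEval.unique he he']

theorem MExpandList.unique {M : MTT Q S D} {ss : List (RTree (Option S))}
    {rs : List (MRhs Q D)} {ts ts' : List (RTree (PL Q D))} :
    MExpandList M ss rs ts → MExpandList M ss rs ts' → ts = ts'
  | .nil, .nil => rfl
  | .cons h hs, .cons h' hs' => by rw [MExpand.unique h h', MExpandList.unique hs hs']

end

theorem MTT.tau_eq_of_forall_wf {M N : MTT Q S D} (hrk : M.rkS = N.rkS)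
    (h : ∀ s : RTree S, s.WF M.rkS →
      ∃ u, MEval M M.init (s.map some) u ∧ MEval N N.init (s.map some) u) :
    M.tau = N.tau := by
  ext ⟨s, t⟩
  constructor
  · rintro ⟨hwf, hev⟩
    obtain ⟨u, hM, hN⟩ := h s hwf
    exact ⟨hrk ▸ hwf, hev.unique hM ▸ hN⟩
  · rintro ⟨hwf, hev⟩
    obtain ⟨u, hM, hN⟩ := h s (hrk ▸ hwf)
    exact ⟨hrk ▸ hwf, hev.unique hN ▸ hM⟩

def MRhs.callIter (q : Q) : ℕ → MRhs Q D → MRhs Q D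
  | 0, r => r
  | j + 1, r => .call q 0 [callIter q j r]

section Monadic

variable {M : MTT Q S D} {σ : S} {s : RTree (Option S)} {q : Q} {c : PL Q D} {k : ℕ}

theorem MEval.stack_of_rules_eq_call_self (hc : ∀ j, c ≠ .pr j)
    (hq : M.rules q σ = some (.call q 0 [.param 0]))
    (h : MEval M q s (stack c k (.node (.pr 0) []))) (n : ℕ) :
    MEval M q (stack (some σ) n s) (stack c k (.node (.pr 0) [])) := by
  induction n with
  | zero => exact h
  | succ n ih =>
    have hcall := MExpand.call (ss := [stack (some σ) n s]) (i := 0) rfl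
      (.cons (.param (j := 0)) .nil) ih
    rw [psubst_stack hc, psubst_node_pr_zero] at hcall
    exact .step hq hcall

theorem MExpand.callIter (hc : ∀ j, c ≠ .pr j)
    (hq : MEval M q s (stack c k (.node (.pr 0) []))) {r : MRhs Q D} {v : RTree (PL Q D)}
    (hr : MExpand M [s] r v) (j : ℕ) :
    MExpand M [s] (r.callIter q j) (stack c (j * k) v) := by
  induction j with
  | zero => simpa [MRhs.callIter] using hr
  | succ j ih =>
    have hcall := MExpand.call (i := 0) rfl (.cons ih .nil) hq
    rwa [psubst_stack hc, psubst_node_pr_zero, ← stack_add, Nat.add_comm, ← Nat.succ_mul]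
      at hcall

theorem MEval.stack_of_rules_eq_callIter (hc : ∀ j, c ≠ .pr j) {q₀ : Q} {j : ℕ}
    (h₀ : M.rules q₀ σ = some ((MRhs.call q₀ 0 []).callIter q j))
    (hq : ∀ n, MEval M q (stack (some σ) n s) (stack c k (.node (.pr 0) [])))
    {ℓ : PL Q D} (hℓ : ∀ j, ℓ ≠ .pr j) (hs : MEval M q₀ s (.node ℓ [])) (n : ℕ) :
    MEval M q₀ (stack (some σ) n s) (stack c (n * (j * k)) (.node ℓ [])) := by
  induction n with
  | zero => simpa using hs
  | succ n ih =>
    have hcall := MExpand.call (ss := [stack (some σ) n s]) (i := 0) rfl .nil ih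
    rw [psubst_stack hc, psubst_leaf_of_ne_pr hℓ] at hcall
    have hexp := MExpand.callIter hc (hq n) hcall j
    rw [← stack_add, Nat.add_comm, ← Nat.succ_mul] at hexp
    exact .step h₀ hexp

end Monadic

theorem aPow_eq_stack (n : ℕ) : aPow n = stack true n (.node false []) := by
  induction n with
  | zero => rfl
  | succ n ih => rw [stack_succ, ← ih]; rfl

theorem map_aPow {β : Type} (f : Bool → β) (n : ℕ) :
    (aPow n).map f = stack (f true) n (.node (f false) []) := by
  rw [aPow_eq_stack, map_stack]; rfl

theorem aPowX_eq_stack (n : ℕ) : aPowX n = stack (some true) n xLeaf := by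
  induction n with
  | zero => rfl
  | succ n ih => rw [stack_succ, ← ih]; rfl

theorem wf_rkGam_iff_exists_aPow {s : RTree Bool} : RTree.WF rkGam s ↔ ∃ n, s = aPow n := by
  constructor
  · intro h
    induction h with
    | @node a ts hlen _ ih =>
      cases a with
      | false => exact ⟨0, by simp_all [rkGam, aPow]⟩
      | true =>
        obtain ⟨t, rfl⟩ := List.length_eq_one_iff.mp hlen
        obtain ⟨n, rfl⟩ := ih t (by simp)
        exact ⟨n + 1, rfl⟩
  · rintro ⟨n, rfl⟩
    induction n with
    | zero => exact .node rfl (by simp)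
    | succ n ih => exact .node rfl (by simpa using ih)

theorem eval_Mex'_aPowX (n : ℕ) :
    MEval Mex' Mex'.init (aPowX n) (stack (.st true) n (.node (.st false) [])) := by
  have hx : MEval Mex' true xLeaf (stack (.st true) 1 (.node (.pr 0) [])) := .atX true
  have hx₀ : MEval Mex' Mex'.init xLeaf (.node (.st false) []) := .atX _
  have hq := MEval.stack_of_rules_eq_call_self (σ := true) (by simp) rfl hx
  simpa [aPowX_eq_stack] using
    MEval.stack_of_rules_eq_callIter (j := 1) (by simp) rfl hq (by simp) hx₀ n

theorem eval_Nex'_aPowX (n : ℕ) :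
    MEval Nex' Nex'.init (aPowX n) (stack (.st true) (2 * n) (.node (.st false) [])) := by
  have hx : MEval Nex' true xLeaf (stack (.st true) 1 (.node (.pr 0) [])) := .atX true
  have hx₀ : MEval Nex' Nex'.init xLeaf (.node (.st false) []) := .atX _
  have hq := MEval.stack_of_rules_eq_call_self (σ := true) (by simp) rfl hx
  simpa [aPowX_eq_stack, Nat.mul_comm] using
    MEval.stack_of_rules_eq_callIter (j := 2) (by simp) rfl hq (by simp) hx₀ n

theorem eval_Mex'_aPow (n : ℕ) :
    MEval Mex' Mex'.init ((aPow n).map some) ((aPow (2 * n)).map PL.out) := by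
  have he : MEval Mex' true (.node (some false) []) (stack (.out true) 2 (.node (.pr 0) [])) :=
    .step rfl (.out (.cons (.out (.cons .param .nil)) .nil))
  have he₀ : MEval Mex' Mex'.init (.node (some false) []) (.node (.out false) []) :=
    .step rfl (.out .nil)
  have hq := MEval.stack_of_rules_eq_call_self (σ := true) (by simp) rfl he
  simpa [map_aPow, Nat.mul_comm] using
    MEval.stack_of_rules_eq_callIter (j := 1) (by simp) rfl hq (by simp) he₀ n

theorem eval_Nex'_aPow (n : ℕ) :
    MEval Nex' Nex'.init ((aPow n).map some) ((aPow (2 * n)).map PL.out) := by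
  have he : MEval Nex' true (.node (some false) []) (stack (.out true) 1 (.node (.pr 0) [])) :=
    .step rfl (.out (.cons .param .nil))
  have he₀ : MEval Nex' Nex'.init (.node (some false) []) (.node (.out false) []) :=
    .step rfl (.out .nil)
  have hq := MEval.stack_of_rules_eq_call_self (σ := true) (by simp) rfl he
  simpa [map_aPow, Nat.mul_comm] using
    MEval.stack_of_rules_eq_callIter (j := 2) (by simp) rfl hq (by simp) he₀ n

theorem height_balance_aPowX (n : ℕ) {ξ₁ ξ₂ : RTree (PL Bool Bool)}
    (h₁ : MEval Mex' Mex'.init (aPowX n) ξ₁) (h₂ : MEval Nex' Nex'.init (aPowX n) ξ₂) :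
    |(ξ₁.height : ℤ) - (ξ₂.height : ℤ)| = n := by
  rw [h₁.unique (eval_Mex'_aPowX n), h₂.unique (eval_Nex'_aPowX n), height_stack, height_stack]
  simp only [height, heightList]
  rw [abs_eq_neg_self.mpr (by omega)]
  omega

/-- `M'` and `N'` are equivalent — both translate `aⁿ(e)` into `a^{2n}(e)` — but
for every `n` the height-balance of `M'(aⁿ(x))` and `N'(aⁿ(x))` equals `n`; hence
equivalent monadic macro tree transducers need not have bounded height-balance. -/
theorem monadic_mtt_unbounded_height_balance :
    MTT.tau Mex' = MTT.tau Nex' ∧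
    (∀ n : ℕ, (aPow n, aPow (2 * n)) ∈ MTT.tau Mex' ∧
              (aPow n, aPow (2 * n)) ∈ MTT.tau Nex') ∧
    (∀ n : ℕ, ∀ ξ1 ξ2, MEval Mex' Mex'.init (aPowX n) ξ1 →
        MEval Nex' Nex'.init (aPowX n) ξ2 →
        |(ξ1.height : ℤ) - (ξ2.height : ℤ)| = n) ∧
    ¬ ∃ c : ℕ, ∀ s u pt, (∃ t, (s, t) ∈ MTT.tau Mex') →
      RTree.ReplaceAt (RTree.map some s) u xLeaf pt →
      ∀ ξ1 ξ2, MEval Mex' Mex'.init pt ξ1 → MEval Nex' Nex'.init pt ξ2 →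
        |(ξ1.height : ℤ) - (ξ2.height : ℤ)| ≤ c := by
  have mem_tau (n : ℕ) :
      (aPow n, aPow (2 * n)) ∈ MTT.tau Mex' ∧ (aPow n, aPow (2 * n)) ∈ MTT.tau Nex' :=
    have hwf := wf_rkGam_iff_exists_aPow.mpr ⟨n, rfl⟩
    ⟨⟨hwf, eval_Mex'_aPow n⟩, ⟨hwf, eval_Nex'_aPow n⟩⟩
  refine ⟨?_, mem_tau, fun n _ _ => height_balance_aPowX n, ?_⟩
  · refine MTT.tau_eq_of_forall_wf rfl fun s hs => ?_
    obtain ⟨n, rfl⟩ := wf_rkGam_iff_exists_aPow.mp hs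
    exact ⟨_, eval_Mex'_aPow n, eval_Nex'_aPow n⟩
  · rintro ⟨c, hc⟩
    have hreplace : ReplaceAt ((aPow (c + 1)).map some) (List.replicate (c + 1) 0) xLeaf
        (aPowX (c + 1)) := by
      rw [map_aPow, aPowX_eq_stack]
      exact replaceAt_stack _ _ _ _
    have hbound := hc _ _ _ ⟨_, (mem_tau (c + 1)).1⟩ hreplace _ _
      (eval_Mex'_aPowX (c + 1)) (eval_Nex'_aPowX (c + 1))
    rw [height_balance_aPowX (c + 1) (eval_Mex'_aPowX _) (eval_Nex'_aPowX _)] at hbound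
    omega
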